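/- arXiv:2410.09728 — 2 statements merged into one kernel-verified Lean document; each statement's English description precedes it below -/
import Mathlib

section
/- Two softmax policies are close in total variation when their parameters are close: if ‖∇_θ f_θ(s,a)‖ ≤ L₁ for all θ, s, a, then for any parameters θ, θ' and any state s, (1/2) ∑_{a∈A} |π_θ(a|s) − π_{θ'}(a|s)| ≤ L₁ ‖θ − θ'‖. -/
/-!
Moving from `θ'` to `θ` moves every logit `f s a ·` by at most `L₁ ‖θ - θ'‖`, by the mean value
theorem. It remains to see that softmax is `1`-Lipschitz from the sup norm on logits to total
variation. Along the segment from logits `x` to `y` the derivative of `softmax · a` in direction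
`v = y - x` is `p a (v a - ∑ b, p b v b)`, so testing the velocity against a sign vector gives at most
`2 ‖v‖`, and the mean value theorem for the tested path bounds the `ℓ¹` distance by `2 ‖y - x‖`.
-/

open Finset

/-- Softmax policy with function approximation: π_θ(a|s) ∝ exp(f_θ(s,a)). -/
noncomputable def fapolicy {S A : Type*} [Fintype A] {n : ℕ}
    (f : S → A → EuclideanSpace ℝ (Fin n) → ℝ)
    (θ : EuclideanSpace ℝ (Fin n)) (s : S) (a : A) : ℝ :=
  Real.exp (f s a θ) / ∑ a', Real.exp (f s a' θ)

open Real

noncomputable def softmax {A : Type*} [Fintype A] (x : A → ℝ) (a : A) : ℝ :=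
  exp (x a) / ∑ b, exp (x b)

section
variable {A : Type*} [Fintype A]

lemma softmax_nonneg (x : A → ℝ) (a : A) : 0 ≤ softmax x a := by
  unfold softmax; positivity

lemma sum_softmax [Nonempty A] (x : A → ℝ) : ∑ a, softmax x a = 1 := by
  simp only [softmax, ← sum_div]
  exact div_self (sum_pos (fun a _ => exp_pos (x a)) univ_nonempty).ne'

lemma hasDerivAt_softmax_add_smul (x v : A → ℝ) (a : A) (t : ℝ) :
    HasDerivAt (fun t : ℝ => softmax (x + t • v) a)
      (softmax (x + t • v) a * (v a - ∑ b, softmax (x + t • v) b * v b)) t := by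
  have : Nonempty A := ⟨a⟩
  have hexp (b : A) : HasDerivAt (fun t : ℝ => exp (x b + t * v b))
      (exp (x b + t * v b) * v b) t :=
    (((hasDerivAt_id t).mul_const (v b)).const_add (x b)).exp.congr_deriv (by simp)
  have hZ : (∑ b, exp (x b + t * v b)) ≠ 0 :=
    (sum_pos (fun b _ => exp_pos _) univ_nonempty).ne'
  have := (hexp a).fun_div (HasDerivAt.fun_sum fun b _ => hexp b) hZ
  simp only [softmax, Pi.add_apply, Pi.smul_apply, smul_eq_mul]
  refine this.congr_deriv ?_
  simp only [div_mul_eq_mul_div, ← sum_div]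
  field_simp

lemma abs_sum_mul_mul_sub_weighted_sum_le {p σ v : A → ℝ} (hp : ∀ a, 0 ≤ p a)
    (hp1 : ∑ a, p a = 1) (hσ : ∀ a, |σ a| ≤ 1) :
    |∑ a, σ a * (p a * (v a - ∑ b, p b * v b))| ≤ 2 * ‖v‖ := by
  have hv (a : A) : |v a| ≤ ‖v‖ := norm_le_pi_norm v a
  have hmean : |∑ b, p b * v b| ≤ ‖v‖ :=
    calc |∑ b, p b * v b| ≤ ∑ b, p b * ‖v‖ := by
          refine (abs_sum_le_sum_abs _ _).trans (sum_le_sum fun b _ => ?_)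
          rw [abs_mul, abs_of_nonneg (hp b)]
          exact mul_le_mul_of_nonneg_left (hv b) (hp b)
      _ = ‖v‖ := by rw [← sum_mul, hp1, one_mul]
  calc |∑ a, σ a * (p a * (v a - ∑ b, p b * v b))|
      ≤ ∑ a, p a * (2 * ‖v‖) := by
        refine (abs_sum_le_sum_abs _ _).trans (sum_le_sum fun a _ => ?_)
        rw [abs_mul, abs_mul, abs_of_nonneg (hp a)]
        have hdev := (abs_sub _ _).trans (add_le_add (hv a) hmean)
        calc |σ a| * (p a * |v a - ∑ b, p b * v b|) ≤ 1 * (p a * (‖v‖ + ‖v‖)) := by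
              have := hp a
              gcongr
              exact hσ a
          _ = p a * (2 * ‖v‖) := by ring
    _ = 2 * ‖v‖ := by rw [← sum_mul, hp1, one_mul]

theorem sum_abs_softmax_sub_le (x y : A → ℝ) :
    ∑ a, |softmax y a - softmax x a| ≤ 2 * ‖y - x‖ := by
  rcases isEmpty_or_nonempty A with hA | hA
  · simp
  set σ : A → ℝ := fun a => SignType.sign (softmax y a - softmax x a)
  set φ : ℝ → ℝ := fun t => ∑ a, σ a * softmax (x + t • (y - x)) a
  have hφ (t : ℝ) : HasDerivAt φ (∑ a, σ a * (softmax (x + t • (y - x)) a *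
      ((y - x) a - ∑ b, softmax (x + t • (y - x)) b * (y - x) b))) t :=
    HasDerivAt.fun_sum fun a _ => (hasDerivAt_softmax_add_smul x (y - x) a t).const_mul (σ a)
  have hσ (a : A) : |σ a| ≤ 1 := by
    simp only [σ]; rcases lt_trichotomy (softmax y a - softmax x a) 0 with h | h | h <;> simp [h]
  have key := norm_image_sub_le_of_norm_deriv_le_segment_01' (f := φ)
    (fun t _ => (hφ t).hasDerivWithinAt) fun t _ =>
      abs_sum_mul_mul_sub_weighted_sum_le (softmax_nonneg _) (sum_softmax _) hσ
  simp only [φ, σ, one_smul, zero_smul, add_zero, add_sub_cancel, ← sum_sub_distrib, ← mul_sub,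
    sign_mul_self, Real.norm_eq_abs] at key
  exact (le_abs_self _).trans key

end

lemma fapolicy_eq_softmax {S A : Type*} [Fintype A] {n : ℕ}
    (f : S → A → EuclideanSpace ℝ (Fin n) → ℝ) (θ : EuclideanSpace ℝ (Fin n)) (s : S) :
    fapolicy f θ s = softmax (fun a => f s a θ) :=
  rfl

/-- Total-variation Lipschitz bound in the parameter:
(1/2)∑_a |π_θ(a|s) − π_{θ'}(a|s)| ≤ L₁ ‖θ − θ'‖. -/
theorem softmax_fa_tv_lipschitz {S A : Type*} [Fintype A] [Nonempty A] {n : ℕ}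
    (f : S → A → EuclideanSpace ℝ (Fin n) → ℝ) (L₁ : ℝ)
    (hdiff : ∀ s a, Differentiable ℝ (f s a))
    (hL : ∀ s a θ, ‖fderiv ℝ (f s a) θ‖ ≤ L₁)
    (θ θ' : EuclideanSpace ℝ (Fin n)) (s : S) :
    (1 / 2) * ∑ a, |fapolicy f θ s a - fapolicy f θ' s a| ≤ L₁ * ‖θ - θ'‖ := by
  have hlogits : ‖(fun a => f s a θ) - fun a => f s a θ'‖ ≤ L₁ * ‖θ - θ'‖ :=
    (pi_norm_le_iff_of_nonempty _).2 fun a =>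
      Convex.norm_image_sub_le_of_norm_fderiv_le (fun x _ => (hdiff s a).differentiableAt)
        (fun x _ => hL s a x) convex_univ (Set.mem_univ θ') (Set.mem_univ θ)
  have htv := sum_abs_softmax_sub_le (fun a => f s a θ') (fun a => f s a θ)
  rw [fapolicy_eq_softmax, fapolicy_eq_softmax]
  linarith
end

section
/- Let π, π' be policies on a finite MDP, A^π the advantage of π with |A^π(s,a)| ≤ A_max, γ ∈ (0,1), and suppose the visitation distribution satisfies ν^π(s) ≥ ε > 0 for all s. Then J(π') − J(π) ≥ (1/(1−γ)) E_{s∼ν^π, a∼π'(·|s)}[A^π(s,a)] − (2γA_max/((1−γ)²ε)) · E_{s∼ν^π}[D_KL(π(·|s) ‖ π'(·|s))]. -/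
/-!
With `g(s) = E_{a∼π'(·|s)}[A^π(s,a)]`, the Bellman equations give `(1 - γP_{π'})(V^{π'} - V^π) = g`,
and splitting `1 - γP_π = (1 - γP_{π'}) + γ(P_{π'} - P_π)` yields
`J(π') - J(π) = (1/(1-γ)) E_ν[g] + (γ/(1-γ)) E_ν[(P_{π'} - P_π)(V^{π'} - V^π)]`.
Since `E_π[A^π] = 0`, both `g` and `P_{π'} - P_π` are controlled by `‖π(·|s) - π'(·|s)‖₁`, and the
resolvent of a stochastic matrix has sup-norm `1/(1-γ)`; so the second term is at most
`γA_max/(1-γ)² · max_s ‖π - π'‖₁ · E_ν‖π - π'‖₁`. Then `ε · max_s ≤ E_ν`, and Jensen followed by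
Pinsker bounds `(E_ν‖π - π'‖₁)²` by `2 E_ν[KL(π ‖ π')]`. Pinsker's inequality itself is
Cauchy–Schwarz with weights `(2p + 4q)/3` against `3(p - q)²/(2p + 4q) ≤ p log(p/q) - p + q`.
-/

open Finset Matrix

/-- State transition matrix induced by policy π: Pπ(s,s') = ∑_a π(a|s) P(s'|s,a). -/
noncomputable def Pmat {S A : Type*} [Fintype S] [Fintype A]
    (P : S → A → S → ℝ) (π : S → A → ℝ) : Matrix S S ℝ :=
  Matrix.of fun s s' => ∑ a, π s a * P s a s'

/-- Expected one-step reward under policy π. -/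
noncomputable def rvec {S A : Type*} [Fintype S] [Fintype A]
    (P : S → A → S → ℝ) (r : S → A → S → ℝ) (π : S → A → ℝ) : S → ℝ :=
  fun s => ∑ a, π s a * ∑ s', P s a s' * r s a s'

/-- Value function V^π = (I − γPπ)⁻¹ rπ (equal to the discounted return series). -/
noncomputable def Vval {S A : Type*} [Fintype S] [Fintype A] [DecidableEq S]
    (γ : ℝ) (P : S → A → S → ℝ) (r : S → A → S → ℝ) (π : S → A → ℝ) : S → ℝ :=
  ((1 : Matrix S S ℝ) - γ • Pmat P π)⁻¹ *ᵥ rvec P r π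

/-- State-action value function Q^π(s,a) = ∑_{s'} P(s'|s,a)(r(s,a,s') + γV^π(s')). -/
noncomputable def Qval {S A : Type*} [Fintype S] [Fintype A] [DecidableEq S]
    (γ : ℝ) (P : S → A → S → ℝ) (r : S → A → S → ℝ) (π : S → A → ℝ) : S → A → ℝ :=
  fun s a => ∑ s', P s a s' * (r s a s' + γ * Vval γ P r π s')

/-- Advantage function A^π = Q^π − V^π. -/
noncomputable def Aval {S A : Type*} [Fintype S] [Fintype A] [DecidableEq S]
    (γ : ℝ) (P : S → A → S → ℝ) (r : S → A → S → ℝ) (π : S → A → ℝ) : S → A → ℝ :=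
  fun s a => Qval γ P r π s a - Vval γ P r π s

/-- Accumulated reward J(π) = E_{s∼ρ}[V^π(s)]. -/
noncomputable def Jval {S A : Type*} [Fintype S] [Fintype A] [DecidableEq S]
    (γ : ℝ) (ρ : S → ℝ) (P : S → A → S → ℝ) (r : S → A → S → ℝ) (π : S → A → ℝ) : ℝ :=
  ∑ s, ρ s * Vval γ P r π s

/-- Discounted state visitation distribution ν^π = (1−γ) ρᵀ(I − γPπ)⁻¹. -/
noncomputable def visit {S A : Type*} [Fintype S] [Fintype A] [DecidableEq S]
    (γ : ℝ) (ρ : S → ℝ) (P : S → A → S → ℝ) (π : S → A → ℝ) : S → ℝ :=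
  (1 - γ) • (ρ ᵥ* ((1 : Matrix S S ℝ) - γ • Pmat P π)⁻¹)

lemma Real.sub_one_mul_div_le_log {t : ℝ} (ht : 0 < t) :
    (t - 1) * (5 * t + 1) / (2 * t * (t + 2)) ≤ Real.log t := by
  set L : ℝ → ℝ := fun x ↦ Real.log x - (x - 1) * (5 * x + 1) / (2 * x * (x + 2))
  have hL x (hx : 0 < x) : HasDerivAt L ((x - 1) ^ 3 / (x ^ 2 * (x + 2) ^ 2)) x := by
    have hden : 2 * x * (x + 2) ≠ 0 := by positivity
    refine ((Real.hasDerivAt_log hx.ne').sub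
      ((((hasDerivAt_id x).sub_const 1).mul (((hasDerivAt_id x).const_mul 5).add_const 1)).div
        (((hasDerivAt_id x).const_mul 2).mul ((hasDerivAt_id x).add_const 2)) hden)).congr_deriv ?_
    simp only [id_eq, Pi.mul_apply]
    field_simp
    ring
  have hderiv {D : Set ℝ} (hD : D ⊆ Set.Ioi 0) x (hx : x ∈ D) :
      HasDerivWithinAt L ((x - 1) ^ 3 / (x ^ 2 * (x + 2) ^ 2)) D x :=
    (hL x (hD hx)).hasDerivWithinAt
  have hcont : ContinuousOn L (Set.Ioi 0) := fun x hx ↦ (hL x hx).continuousAt.continuousWithinAt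
  suffices 0 ≤ L t by simpa [L] using this
  have hL1 : L 1 = 0 := by norm_num [L]
  rcases le_total t 1 with ht1 | ht1
  · have hanti : AntitoneOn L (Set.Ioc 0 1) := by
      refine antitoneOn_of_hasDerivWithinAt_nonpos (convex_Ioc 0 1)
        (hcont.mono Set.Ioc_subset_Ioi_self) (hderiv (by simp [Set.Ioo_subset_Ioi_self]))
        fun x hx ↦ ?_
      rw [interior_Ioc] at hx
      have : (x - 1) ^ 3 ≤ 0 := by nlinarith [hx.1, hx.2, sq_nonneg (x - 1)]
      exact div_nonpos_of_nonpos_of_nonneg this (by positivity)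
    simpa [hL1] using hanti ⟨ht, ht1⟩ ⟨one_pos, le_rfl⟩ ht1
  · have hmono : MonotoneOn L (Set.Ici 1) := by
      refine monotoneOn_of_hasDerivWithinAt_nonneg (convex_Ici 1)
        (hcont.mono fun x hx ↦ Set.mem_Ioi.2 (one_pos.trans_le hx))
        (hderiv (by simp)) fun x hx ↦ ?_
      rw [interior_Ici] at hx
      have : 0 ≤ x - 1 := sub_nonneg.2 (le_of_lt hx)
      positivity
    simpa [hL1] using hmono Set.self_mem_Ici ht1 ht1

lemma three_mul_sq_sub_div_le_mul_log_div_sub_add {p q : ℝ} (hp : 0 < p) (hq : 0 < q) :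
    3 * (p - q) ^ 2 / (2 * p + 4 * q) ≤ p * Real.log (p / q) - p + q := by
  have hlog := Real.sub_one_mul_div_le_log (div_pos hp hq)
  have hlhs : (p / q - 1) * (5 * (p / q) + 1) / (2 * (p / q) * (p / q + 2))
      = (p - q) * (5 * p + q) / (2 * p * (p + 2 * q)) := by
    field_simp
  rw [hlhs, div_le_iff₀ (by positivity)] at hlog
  rw [div_le_iff₀ (by positivity)]
  nlinarith

/-- **Pinsker's inequality**, with `∑ |p - q| = 2 D_TV(p, q)`. -/
theorem sq_sum_abs_sub_le_two_mul_sum_mul_log_div {ι : Type*} [Fintype ι] {p q : ι → ℝ}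
    (hp : ∀ i, 0 < p i) (hq : ∀ i, 0 < q i) (hp1 : ∑ i, p i = 1) (hq1 : ∑ i, q i = 1) :
    (∑ i, |p i - q i|) ^ 2 ≤ 2 * ∑ i, p i * Real.log (p i / q i) := by
  have hw i : 0 < (2 * p i + 4 * q i) / 3 := by linarith [hp i, hq i]
  have hw1 : ∑ i, (2 * p i + 4 * q i) / 3 = 2 := by
    rw [← sum_div, sum_add_distrib, ← mul_sum, ← mul_sum, hp1, hq1]; norm_num
  have hcs := sq_sum_div_le_sum_sq_div univ (fun i ↦ |p i - q i|) fun i _ ↦ hw i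
  rw [hw1, div_le_iff₀ two_pos] at hcs
  calc (∑ i, |p i - q i|) ^ 2 ≤ (∑ i, |p i - q i| ^ 2 / ((2 * p i + 4 * q i) / 3)) * 2 := hcs
    _ ≤ (∑ i, (p i * Real.log (p i / q i) - p i + q i)) * 2 := by
      gcongr with i
      rw [sq_abs, div_div_eq_mul_div, mul_comm]
      exact three_mul_sq_sub_div_le_mul_log_div_sub_add (hp i) (hq i)
    _ = 2 * ∑ i, p i * Real.log (p i / q i) := by
      rw [sum_add_distrib, sum_sub_distrib, hp1, hq1]; ring

lemma abs_sum_mul_le_of_mem_stdSimplex {ι : Type*} [Fintype ι] {w f : ι → ℝ}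
    (hw : w ∈ stdSimplex ℝ ι) {B : ℝ} (hf : ∀ i, |f i| ≤ B) : |∑ i, w i * f i| ≤ B :=
  calc |∑ i, w i * f i| ≤ ∑ i, w i * B := by
        refine (abs_sum_le_sum_abs _ _).trans (sum_le_sum fun i _ ↦ ?_)
        rw [abs_mul, abs_of_nonneg (hw.1 i)]
        exact mul_le_mul_of_nonneg_left (hf i) (hw.1 i)
    _ = B := by rw [← sum_mul, hw.2, one_mul]

lemma abs_sum_sub_mul_le {ι : Type*} [Fintype ι] (p q : ι → ℝ) {f : ι → ℝ} {B : ℝ}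
    (hf : ∀ i, |f i| ≤ B) : |∑ i, (p i - q i) * f i| ≤ (∑ i, |p i - q i|) * B := by
  rw [sum_mul]
  refine (abs_sum_le_sum_abs _ _).trans (sum_le_sum fun i _ ↦ ?_)
  rw [abs_mul]
  exact mul_le_mul_of_nonneg_left (hf i) (abs_nonneg _)

lemma sq_sum_mul_le_sum_mul_sq {ι : Type*} [Fintype ι] {w : ι → ℝ} (hw : w ∈ stdSimplex ℝ ι)
    (f : ι → ℝ) : (∑ i, w i * f i) ^ 2 ≤ ∑ i, w i * f i ^ 2 := by
  simpa [hw.2] using sum_sq_le_sum_mul_sum_of_sq_le_mul univ (fun i _ ↦ hw.1 i)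
    (fun i _ ↦ mul_nonneg (hw.1 i) (sq_nonneg (f i))) fun i _ ↦ le_of_eq (by ring)

lemma sq_sum_mul_sum_abs_sub_le {S ι : Type*} [Fintype S] [Fintype ι] {ν : S → ℝ}
    (hν : ν ∈ stdSimplex ℝ S) {p q : S → ι → ℝ} (hp : ∀ s i, 0 < p s i) (hq : ∀ s i, 0 < q s i)
    (hp1 : ∀ s, ∑ i, p s i = 1) (hq1 : ∀ s, ∑ i, q s i = 1) :
    (∑ s, ν s * ∑ i, |p s i - q s i|) ^ 2
      ≤ 2 * ∑ s, ν s * ∑ i, p s i * Real.log (p s i / q s i) :=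
  calc (∑ s, ν s * ∑ i, |p s i - q s i|) ^ 2 ≤ ∑ s, ν s * (∑ i, |p s i - q s i|) ^ 2 :=
        sq_sum_mul_le_sum_mul_sq hν _
    _ ≤ ∑ s, ν s * (2 * ∑ i, p s i * Real.log (p s i / q s i)) :=
        sum_le_sum fun s _ ↦ mul_le_mul_of_nonneg_left
          (sq_sum_abs_sub_le_two_mul_sum_mul_log_div (hp s) (hq s) (hp1 s) (hq1 s)) (hν.1 s)
    _ = 2 * ∑ s, ν s * ∑ i, p s i * Real.log (p s i / q s i) := by
        rw [mul_sum]; exact sum_congr rfl fun _ _ ↦ by ring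

lemma le_sum_mul_div_of_le {ι : Type*} [Fintype ι] {w f : ι → ℝ} {ε : ℝ} (hε : 0 < ε)
    (hw : ∀ i, ε ≤ w i) (hf : ∀ i, 0 ≤ f i) (i : ι) : f i ≤ (∑ j, w j * f j) / ε := by
  rw [le_div_iff₀' hε]
  exact (mul_le_mul_of_nonneg_right (hw i) (hf i)).trans <| single_le_sum
    (f := fun j ↦ w j * f j) (fun j _ ↦ mul_nonneg (hε.le.trans (hw j)) (hf j)) (mem_univ i)

namespace Matrix

variable {n : Type*} [Fintype n] [DecidableEq n] {Q : Matrix n n ℝ} {γ : ℝ}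

lemma row_mem_stdSimplex_of_mem_rowStochastic (hQ : Q ∈ rowStochastic ℝ n) (i : n) :
    Q i ∈ stdSimplex ℝ n :=
  ⟨fun _ ↦ nonneg_of_mem_rowStochastic hQ, sum_row_of_mem_rowStochastic hQ i⟩

/-- The resolvent `(1 - γ Q)⁻¹` of a stochastic matrix has sup-norm at most `1 / (1 - γ)`. -/
lemma abs_le_div_of_one_sub_smul_mulVec_eq (hQ : Q ∈ rowStochastic ℝ n) (hγ0 : 0 ≤ γ)
    (hγ1 : γ < 1) {w g : n → ℝ} (hwg : (1 - γ • Q) *ᵥ w = g) {B : ℝ} (hg : ∀ i, |g i| ≤ B)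
    (i : n) : |w i| ≤ B / (1 - γ) := by
  obtain ⟨i₀, -, hi₀⟩ := exists_max_image univ (fun j ↦ |w j|) ⟨i, mem_univ i⟩
  have hfix : w i₀ = g i₀ + γ * ∑ j, Q i₀ j * w j := by
    have : w = g + γ • (Q *ᵥ w) := by rw [← hwg, sub_mulVec, one_mulVec, smul_mulVec]; abel
    exact congrFun this i₀
  have hmean : |∑ j, Q i₀ j * w j| ≤ |w i₀| :=
    abs_sum_mul_le_of_mem_stdSimplex (row_mem_stdSimplex_of_mem_rowStochastic hQ i₀)
      fun j ↦ hi₀ j (mem_univ j)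
  have hmax : |w i₀| ≤ B + γ * |w i₀| :=
    calc |w i₀| ≤ |g i₀| + γ * |∑ j, Q i₀ j * w j| := by
          rw [hfix]; exact (abs_add_le _ _).trans_eq (by rw [abs_mul, abs_of_nonneg hγ0])
      _ ≤ B + γ * |w i₀| := add_le_add (hg i₀) (mul_le_mul_of_nonneg_left hmean hγ0)
  rw [le_div_iff₀ (sub_pos.2 hγ1)]
  nlinarith [hi₀ i (mem_univ i)]

lemma isUnit_det_one_sub_smul (hQ : Q ∈ rowStochastic ℝ n) (hγ0 : 0 ≤ γ) (hγ1 : γ < 1) :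
    IsUnit (1 - γ • Q).det := by
  refine isUnit_iff_ne_zero.2 fun hdet ↦ ?_
  obtain ⟨v, hv, hv0⟩ := exists_mulVec_eq_zero_iff.2 hdet
  refine hv (funext fun i ↦ abs_nonpos_iff.1 ?_)
  simpa using abs_le_div_of_one_sub_smul_mulVec_eq hQ hγ0 hγ1 hv0 (B := 0) (by simp) i

end Matrix

section MDP

variable {S A : Type*} [Fintype S] [Fintype A]
  {γ : ℝ} {ρ : S → ℝ} {P : S → A → S → ℝ} {r : S → A → S → ℝ} {π π' : S → A → ℝ}

lemma Pmat_mulVec (w : S → ℝ) (s : S) :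
    (Pmat P π *ᵥ w) s = ∑ a, π s a * ∑ s', P s a s' * w s' := by
  simp only [mulVec, dotProduct, Pmat, of_apply, sum_mul, mul_sum]
  rw [sum_comm]
  exact sum_congr rfl fun _ _ ↦ sum_congr rfl fun _ _ ↦ mul_assoc _ _ _

lemma Pmat_sub_Pmat_mulVec (w : S → ℝ) (s : S) :
    ((Pmat P π' - Pmat P π) *ᵥ w) s = ∑ a, (π' s a - π s a) * ∑ s', P s a s' * w s' := by
  simp only [sub_mulVec, Pi.sub_apply, Pmat_mulVec, sub_mul, sum_sub_distrib]

variable [DecidableEq S]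

lemma Pmat_mem_rowStochastic (hP : ∀ s a, P s a ∈ stdSimplex ℝ S)
    (hπ : ∀ s, π s ∈ stdSimplex ℝ A) : Pmat P π ∈ rowStochastic ℝ S := by
  refine mem_rowStochastic_iff_sum.2
    ⟨fun s s' ↦ sum_nonneg fun a _ ↦ mul_nonneg ((hπ s).1 a) ((hP s a).1 s'), fun s ↦ ?_⟩
  simp only [Pmat, of_apply]
  rw [sum_comm]
  simp [← mul_sum, (hP _ _).2, (hπ s).2]

lemma one_sub_smul_Pmat_mulVec_Vval (h : IsUnit (1 - γ • Pmat P π).det) :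
    (1 - γ • Pmat P π) *ᵥ Vval γ P r π = rvec P r π := by
  rw [Vval, mulVec_mulVec, mul_nonsing_inv _ h, one_mulVec]

lemma sum_mul_Aval (τ : S → A → ℝ) {s : S} (hτ : ∑ a, τ s a = 1) :
    ∑ a, τ s a * Aval γ P r π s a
      = rvec P r τ s + γ * (Pmat P τ *ᵥ Vval γ P r π) s - Vval γ P r π s := by
  simp only [Aval, Qval, rvec, Pmat_mulVec, mul_sub, mul_add, sum_sub_distrib, sum_add_distrib,
    ← sum_mul, hτ, one_mul, mul_sum]
  congr 2
  exact sum_congr rfl fun _ _ ↦ sum_congr rfl fun _ _ ↦ by ring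

lemma sum_mul_Aval_self (h : IsUnit (1 - γ • Pmat P π).det) {s : S} (hπ : ∑ a, π s a = 1) :
    ∑ a, π s a * Aval γ P r π s a = 0 := by
  have bellman := congrFun (one_sub_smul_Pmat_mulVec_Vval (r := r) h) s
  simp only [sub_mulVec, one_mulVec, smul_mulVec, Pi.sub_apply, Pi.smul_apply,
    smul_eq_mul] at bellman
  rw [sum_mul_Aval π hπ]
  linarith

lemma one_sub_smul_Pmat_mulVec_Vval_sub (h' : IsUnit (1 - γ • Pmat P π').det)
    (hπ' : ∀ s, ∑ a, π' s a = 1) :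
    (1 - γ • Pmat P π') *ᵥ (Vval γ P r π' - Vval γ P r π)
      = fun s ↦ ∑ a, π' s a * Aval γ P r π s a := by
  funext s
  have bellman := congrFun (one_sub_smul_Pmat_mulVec_Vval (r := r) h') s
  simp only [sub_mulVec, one_mulVec, smul_mulVec, mulVec_sub, Pi.sub_apply, Pi.smul_apply,
    smul_eq_mul] at bellman ⊢
  rw [sum_mul_Aval π' (hπ' s)]
  linarith

lemma sum_mul_eq_sum_visit_mul (hγ : γ ≠ 1) (h : IsUnit (1 - γ • Pmat P π).det) (w : S → ℝ) :
    ∑ s, ρ s * w s = 1 / (1 - γ) * ∑ s, visit γ ρ P π s * ((1 - γ • Pmat P π) *ᵥ w) s := by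
  have hγ' : 1 - γ ≠ 0 := sub_ne_zero.2 hγ.symm
  change ρ ⬝ᵥ w = 1 / (1 - γ) * (visit γ ρ P π ⬝ᵥ ((1 - γ • Pmat P π) *ᵥ w))
  rw [visit, smul_dotProduct, ← dotProduct_mulVec, mulVec_mulVec, nonsing_inv_mul _ h,
    one_mulVec, smul_eq_mul, ← mul_assoc, one_div_mul_cancel hγ', one_mul]

lemma sum_visit (hρ : ∑ s, ρ s = 1) (hγ : γ ≠ 1) (hM : Pmat P π ∈ rowStochastic ℝ S)
    (h : IsUnit (1 - γ • Pmat P π).det) : ∑ s, visit γ ρ P π s = 1 := by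
  have hγ' : 1 - γ ≠ 0 := sub_ne_zero.2 hγ.symm
  have := sum_mul_eq_sum_visit_mul (ρ := ρ) hγ h 1
  rw [sub_mulVec, one_mulVec, smul_mulVec, one_vecMul_of_mem_rowStochastic hM] at this
  field_simp at this
  simpa [hρ, ← sum_mul, hγ'] using this.symm

theorem Jval_sub_Jval (hγ : γ ≠ 1) (h : IsUnit (1 - γ • Pmat P π).det)
    (h' : IsUnit (1 - γ • Pmat P π').det) (hπ' : ∀ s, ∑ a, π' s a = 1) :
    Jval γ ρ P r π' - Jval γ ρ P r π
      = 1 / (1 - γ) * ∑ s, visit γ ρ P π s * ∑ a, π' s a * Aval γ P r π s a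
        + γ / (1 - γ) * ∑ s, visit γ ρ P π s *
            ((Pmat P π' - Pmat P π) *ᵥ (Vval γ P r π' - Vval γ P r π)) s := by
  have hsplit : 1 - γ • Pmat P π = (1 - γ • Pmat P π') + γ • (Pmat P π' - Pmat P π) := by
    rw [smul_sub]; abel
  have := sum_mul_eq_sum_visit_mul (ρ := ρ) hγ h (Vval γ P r π' - Vval γ P r π)
  rw [hsplit, add_mulVec, one_sub_smul_Pmat_mulVec_Vval_sub h' hπ', smul_mulVec] at this
  simp only [Jval, ← sum_sub_distrib, ← mul_sub]
  simp only [Pi.sub_apply] at this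
  rw [this]
  simp only [Pi.add_apply, Pi.smul_apply, smul_eq_mul, mul_add, sum_add_distrib, mul_sum]
  congr 1
  exact sum_congr rfl fun _ _ ↦ by ring

/-- The second-order performance difference bound, for any `δ ≥ 2 D_TV^max(π ‖ π')`. -/
theorem abs_Jval_sub_Jval_sub_le (hγ0 : 0 ≤ γ) (hγ1 : γ < 1)
    (hP : ∀ s a, P s a ∈ stdSimplex ℝ S) (hπ : ∀ s, π s ∈ stdSimplex ℝ A)
    (hπ' : ∀ s, π' s ∈ stdSimplex ℝ A) {Amax : ℝ} (hA : ∀ s a, |Aval γ P r π s a| ≤ Amax)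
    (hAmax : 0 ≤ Amax) (hν : ∀ s, 0 ≤ visit γ ρ P π s) {δ : ℝ}
    (hδ : ∀ s, ∑ a, |π s a - π' s a| ≤ δ) :
    |Jval γ ρ P r π' - Jval γ ρ P r π
        - 1 / (1 - γ) * ∑ s, visit γ ρ P π s * ∑ a, π' s a * Aval γ P r π s a|
      ≤ γ * Amax * δ / (1 - γ) ^ 2 * ∑ s, visit γ ρ P π s * ∑ a, |π s a - π' s a| := by
  have h1γ : 0 < 1 - γ := sub_pos.2 hγ1
  have hM := Pmat_mem_rowStochastic hP hπ
  have hM' := Pmat_mem_rowStochastic hP hπ'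
  have h := isUnit_det_one_sub_smul hM hγ0 hγ1
  have h' := isUnit_det_one_sub_smul hM' hγ0 hγ1
  have hdist s : ∑ a, |π' s a - π s a| = ∑ a, |π s a - π' s a| :=
    sum_congr rfl fun _ _ ↦ abs_sub_comm _ _
  have hg s : |∑ a, π' s a * Aval γ P r π s a| ≤ Amax * δ := by
    have hcentre : ∑ a, π' s a * Aval γ P r π s a = ∑ a, (π' s a - π s a) * Aval γ P r π s a := by
      rw [← sub_zero (∑ a, π' s a * _), ← sum_mul_Aval_self (r := r) h (hπ s).2]
      simp only [sub_mul, sum_sub_distrib]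
    rw [hcentre, mul_comm]
    exact (abs_sum_sub_mul_le _ _ (hA s)).trans
      (mul_le_mul_of_nonneg_right ((hdist s).trans_le (hδ s)) hAmax)
  have hw := abs_le_div_of_one_sub_smul_mulVec_eq hM' hγ0 hγ1
    (one_sub_smul_Pmat_mulVec_Vval_sub (r := r) h' fun s ↦ (hπ' s).2) hg
  have hu s : |((Pmat P π' - Pmat P π) *ᵥ (Vval γ P r π' - Vval γ P r π)) s|
      ≤ (∑ a, |π s a - π' s a|) * (Amax * δ / (1 - γ)) := by
    rw [Pmat_sub_Pmat_mulVec, ← hdist]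
    exact abs_sum_sub_mul_le _ _ fun a ↦ abs_sum_mul_le_of_mem_stdSimplex (hP s a) hw
  rw [Jval_sub_Jval hγ1.ne h h' fun s ↦ (hπ' s).2, add_sub_cancel_left, abs_mul,
    abs_of_nonneg (div_nonneg hγ0 h1γ.le)]
  calc γ / (1 - γ) * |∑ s, visit γ ρ P π s *
          ((Pmat P π' - Pmat P π) *ᵥ (Vval γ P r π' - Vval γ P r π)) s|
      ≤ γ / (1 - γ) * ∑ s, visit γ ρ P π s *
          ((∑ a, |π s a - π' s a|) * (Amax * δ / (1 - γ))) := by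
        gcongr
        refine (abs_sum_le_sum_abs _ _).trans (sum_le_sum fun s _ ↦ ?_)
        rw [abs_mul, abs_of_nonneg (hν s)]
        exact mul_le_mul_of_nonneg_left (hu s) (hν s)
    _ = γ * Amax * δ / (1 - γ) ^ 2 * ∑ s, visit γ ρ P π s * ∑ a, |π s a - π' s a| := by
        simp only [← mul_assoc, ← sum_mul]
        field_simp

end MDP

theorem performance_lower_bound_kl_general {S A : Type*} [Fintype S] [Fintype A] [DecidableEq S]
    [Nonempty S] [Nonempty A]
    (γ : ℝ) (hγ0 : 0 < γ) (hγ1 : γ < 1)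
    (ρ : S → ℝ) (hρ1 : ∑ s, ρ s = 1)
    (P : S → A → S → ℝ) (hP0 : ∀ s a s', 0 ≤ P s a s') (hP1 : ∀ s a, ∑ s', P s a s' = 1)
    (r : S → A → S → ℝ)
    (π π' : S → A → ℝ)
    (hπ0 : ∀ s a, 0 < π s a) (hπ1 : ∀ s, ∑ a, π s a = 1)
    (hπ'0 : ∀ s a, 0 < π' s a) (hπ'1 : ∀ s, ∑ a, π' s a = 1)
    (Amax : ℝ) (hA : ∀ s a, |Aval γ P r π s a| ≤ Amax)
    (ε : ℝ) (hε : 0 < ε) (hν : ∀ s, ε ≤ visit γ ρ P π s) :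
    Jval γ ρ P r π' - Jval γ ρ P r π ≥
      (1 / (1 - γ)) * (∑ s, visit γ ρ P π s * ∑ a, π' s a * Aval γ P r π s a) -
        (2 * γ * Amax / ((1 - γ) ^ 2 * ε)) *
          ∑ s, visit γ ρ P π s * ∑ a, π s a * Real.log (π s a / π' s a) := by
  set ν := visit γ ρ P π
  set D := ∑ s, ν s * ∑ a, |π s a - π' s a|
  set KL := ∑ s, ν s * ∑ a, π s a * Real.log (π s a / π' s a)
  have hP s a : P s a ∈ stdSimplex ℝ S := ⟨hP0 s a, hP1 s a⟩
  have hπ s : π s ∈ stdSimplex ℝ A := ⟨fun a ↦ (hπ0 s a).le, hπ1 s⟩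
  have hπ' s : π' s ∈ stdSimplex ℝ A := ⟨fun a ↦ (hπ'0 s a).le, hπ'1 s⟩
  have hM := Pmat_mem_rowStochastic hP hπ
  have hν0 s : 0 ≤ ν s := hε.le.trans (hν s)
  have hνsum := sum_visit hρ1 hγ1.ne hM (isUnit_det_one_sub_smul hM hγ0.le hγ1)
  have hAmax : 0 ≤ Amax := (abs_nonneg _).trans (hA (Classical.arbitrary S) (Classical.arbitrary A))
  have hδ := le_sum_mul_div_of_le (f := fun s ↦ ∑ a, |π s a - π' s a|) hε hν
    fun s ↦ sum_nonneg fun a _ ↦ abs_nonneg _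
  have hbound := abs_Jval_sub_Jval_sub_le hγ0.le hγ1 hP hπ hπ' hA hAmax hν0 hδ
  have hD : D ^ 2 ≤ 2 * KL := sq_sum_mul_sum_abs_sub_le ⟨hν0, hνsum⟩ hπ0 hπ'0 hπ1 hπ'1
  have hsecond : γ * Amax * (D / ε) / (1 - γ) ^ 2 * D ≤ 2 * γ * Amax / ((1 - γ) ^ 2 * ε) * KL :=
    calc γ * Amax * (D / ε) / (1 - γ) ^ 2 * D = γ * Amax / ((1 - γ) ^ 2 * ε) * D ^ 2 := by
          rw [mul_comm _ ε, ← div_div]; ring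
      _ ≤ γ * Amax / ((1 - γ) ^ 2 * ε) * (2 * KL) := by gcongr
      _ = 2 * γ * Amax / ((1 - γ) ^ 2 * ε) * KL := by ring
  linarith [(abs_le.1 hbound).1]

/-- Lower bound on the performance difference with a KL penalty (Lemma 5.4 with
D²_{τ,1} = E_{ν^π}[D_KL(π‖π')]): J(π') − J(π) ≥
(1/(1−γ)) E_{ν^π,π'}[A^π] − (2γA_max/((1−γ)²ε)) E_{ν^π}[D_KL(π(·|s)‖π'(·|s))]. -/
theorem performance_lower_bound_kl {S A : Type*} [Fintype S] [Fintype A] [DecidableEq S]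
    [Nonempty S] [Nonempty A]
    (γ : ℝ) (hγ0 : 0 < γ) (hγ1 : γ < 1)
    (ρ : S → ℝ) (hρ0 : ∀ s, 0 ≤ ρ s) (hρ1 : ∑ s, ρ s = 1)
    (P : S → A → S → ℝ) (hP0 : ∀ s a s', 0 ≤ P s a s') (hP1 : ∀ s a, ∑ s', P s a s' = 1)
    (r : S → A → S → ℝ) (rmax : ℝ) (hr0 : ∀ s a s', 0 ≤ r s a s')
    (hr1 : ∀ s a s', r s a s' ≤ rmax)
    (π π' : S → A → ℝ)
    (hπ0 : ∀ s a, 0 < π s a) (hπ1 : ∀ s, ∑ a, π s a = 1)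
    (hπ'0 : ∀ s a, 0 < π' s a) (hπ'1 : ∀ s, ∑ a, π' s a = 1)
    (Amax : ℝ) (hA : ∀ s a, |Aval γ P r π s a| ≤ Amax)
    (ε : ℝ) (hε : 0 < ε) (hν : ∀ s, ε ≤ visit γ ρ P π s) :
    Jval γ ρ P r π' - Jval γ ρ P r π ≥
      (1 / (1 - γ)) * (∑ s, visit γ ρ P π s * ∑ a, π' s a * Aval γ P r π s a) -
        (2 * γ * Amax / ((1 - γ) ^ 2 * ε)) *
          ∑ s, visit γ ρ P π s * ∑ a, π s a * Real.log (π s a / π' s a) :=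
  performance_lower_bound_kl_general γ hγ0 hγ1 ρ hρ1 P hP0 hP1 r π π' hπ0 hπ1 hπ'0 hπ'1 Amax hA ε hε
    hν
end
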